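/- arXiv:1806.01754 — 2 statements merged into one kernel-verified Lean document; each statement's English description precedes it below -/
import Mathlib

section
/- Score matching identity: Let p(y,x) be a probability density, continuously differentiable in y, and g(y,x) twice continuously differentiable in y. Assume for each j and each x that lim_{|y_j|→∞} (∂g/∂y_j)(y,x) p(y,x) = 0 and all integrals below are finite. Then (1/2)∫∫ ‖∇_y g − ∇_y log q(y|x)‖² p dy dx = ∑_{j=1}^{d_y} ∫∫ [ (1/2)(∂g/∂y_j)² + ∂²g/∂y_j² ] p(y,x) dy dx + C, where C = (1/2)∫∫ ‖∇_y log q(y|x)‖² p dy dx does not depend on g. -/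
open MeasureTheory Filter
open scoped BigOperators

/-! Since `(∂ⱼ log p) p = ∂ⱼ p`, expanding the square gives pointwise
`½‖∇g - ∇log p‖² p = ∑ⱼ (½ (∂ⱼg)² p - ∂ⱼg ∂ⱼp) + ½‖∇log p‖² p`.
This differs from the integrand on the right by `∑ⱼ ∂ⱼ(∂ⱼg · p)`, and the integral of
`∂ⱼ(∂ⱼg · p)` along every line parallel to the `j`-th axis vanishes by the boundary condition.
Fubini, first in `x` and then along these lines, turns this into the identity. -/

theorem integral_eq_zero_of_hasDerivAt_of_tendsto_cocompact {E : Type*} [NormedAddCommGroup E]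
    [NormedSpace ℝ E] [CompleteSpace E] {f f' : ℝ → E} (hderiv : ∀ t, HasDerivAt f (f' t) t)
    (hf' : Integrable f') (hf : Tendsto f (cocompact ℝ) (nhds 0)) :
    ∫ t, f' t = 0 := by
  rw [cocompact_eq_atBot_atTop, tendsto_sup] at hf
  simpa using integral_of_hasDerivAt_of_tendsto hderiv hf' hf.1 hf.2

theorem hasDerivAt_comp_add_sub_smul {E F : Type*} [NormedAddCommGroup E] [NormedSpace ℝ E]
    [NormedAddCommGroup F] [NormedSpace ℝ F] {f : E → F} (y v : E) (c t : ℝ)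
    (hf : DifferentiableAt ℝ f (y + (t - c) • v)) :
    HasDerivAt (fun s : ℝ => f (y + (s - c) • v)) (fderiv ℝ f (y + (t - c) • v) v) t := by
  have hline : HasDerivAt (fun s : ℝ => y + (s - c) • v) v t := by
    simpa using (((hasDerivAt_id t).sub_const c).smul_const v).const_add y
  exact hf.hasFDerivAt.comp_hasDerivAt t hline

theorem integrable_of_integrable_sum_of_nonneg {α ι : Type*} [MeasurableSpace α] {μ : Measure α}
    {s : Finset ι} {f : ι → α → ℝ} (hsum : Integrable (fun a => ∑ i ∈ s, f i a) μ)
    (hf : ∀ i ∈ s, ∀ a, 0 ≤ f i a) (hmeas : ∀ i ∈ s, AEStronglyMeasurable (f i) μ)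
    {i : ι} (hi : i ∈ s) : Integrable (f i) μ :=
  hsum.mono' (hmeas i hi) <| ae_of_all _ fun a => by
    rw [Real.norm_of_nonneg (hf i hi a)]
    exact Finset.single_le_sum (f := fun i => f i a) (fun k hk => hf k hk a) hi

theorem fderiv_log_mul_self {E : Type*} [NormedAddCommGroup E] [NormedSpace ℝ E] {f : E → ℝ}
    {y : E} (hf : DifferentiableAt ℝ f y) (hy : f y ≠ 0) (v : E) :
    fderiv ℝ (fun y' => Real.log (f y')) y v * f y = fderiv ℝ f y v := by
  rw [(hf.hasFDerivAt.log hy).fderiv, FunLike.coe_smul, Pi.smul_apply, smul_eq_mul,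
    mul_right_comm, inv_mul_cancel₀ hy, one_mul]

namespace EuclideanSpace

theorem gradient_apply {n : ℕ} (f : EuclideanSpace ℝ (Fin n) → ℝ) (y : EuclideanSpace ℝ (Fin n))
    (j : Fin n) : gradient f y j = fderiv ℝ f y (EuclideanSpace.single j 1) := by
  rw [← inner_gradient_left, EuclideanSpace.inner_single_right]
  simp

theorem half_norm_sub_sq {n : ℕ} (a b : EuclideanSpace ℝ (Fin n)) :
    (1 / 2 : ℝ) * ‖a - b‖ ^ 2 =
      ∑ j, ((1 / 2 : ℝ) * a j ^ 2 - a j * b j) + (1 / 2 : ℝ) * ‖b‖ ^ 2 := by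
  simp only [EuclideanSpace.real_norm_sq_eq, PiLp.sub_apply, Finset.mul_sum,
    ← Finset.sum_add_distrib]
  exact Finset.sum_congr rfl fun j _ => by ring

variable {m : ℕ}

noncomputable def insertNthMeasurableEquiv (j : Fin (m + 1)) :
    ℝ × (Fin m → ℝ) ≃ᵐ EuclideanSpace ℝ (Fin (m + 1)) :=
  (MeasurableEquiv.piFinSuccAbove (fun _ => ℝ) j).symm.trans
    (MeasurableEquiv.toLp 2 (Fin (m + 1) → ℝ))

theorem measurePreserving_insertNthMeasurableEquiv (j : Fin (m + 1)) :
    MeasurePreserving (insertNthMeasurableEquiv j) :=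
  (EuclideanSpace.volume_preserving_symm_measurableEquiv_toLp (Fin (m + 1))).symm.comp
    ((volume_preserving_piFinSuccAbove (fun _ => ℝ) j).symm _)

theorem insertNthMeasurableEquiv_apply (j : Fin (m + 1)) (t : ℝ) (z : Fin m → ℝ) :
    insertNthMeasurableEquiv j (t, z) = WithLp.toLp 2 (Fin.insertNth j t z) := rfl

theorem insertNthMeasurableEquiv_eq_add_smul_single (j : Fin (m + 1)) (t : ℝ) (z : Fin m → ℝ) :
    insertNthMeasurableEquiv j (t, z) =
      insertNthMeasurableEquiv j (0, z) +
        (t - insertNthMeasurableEquiv j (0, z) j) • EuclideanSpace.single j 1 := by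
  ext i
  rcases eq_or_ne i j with rfl | hij
  · simp [insertNthMeasurableEquiv_apply]
  · obtain ⟨k, rfl⟩ := Fin.exists_succAbove_eq hij
    simp [insertNthMeasurableEquiv_apply, hij]

theorem integral_eq_zero_of_integral_line_eq_zero {n : ℕ} (j : Fin n)
    {w : EuclideanSpace ℝ (Fin n) → ℝ} (hw : Integrable w)
    (hline : ∀ y : EuclideanSpace ℝ (Fin n),
      Integrable (fun t => w (y + (t - y j) • EuclideanSpace.single j 1)) →
        ∫ t, w (y + (t - y j) • EuclideanSpace.single j 1) = 0) :
    ∫ y, w y = 0 := by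
  obtain ⟨m, rfl⟩ : ∃ m, n = m + 1 := ⟨n - 1, (Nat.succ_pred_eq_of_pos j.pos).symm⟩
  have hmp := measurePreserving_insertNthMeasurableEquiv j
  have hemb := (insertNthMeasurableEquiv j).measurableEmbedding
  have hint : Integrable (fun q => w (insertNthMeasurableEquiv j q)) (volume.prod volume) :=
    (hmp.integrable_comp_emb hemb).2 hw
  rw [← hmp.integral_comp hemb, Measure.volume_eq_prod, integral_prod_symm _ hint]
  refine (integral_congr_ae ?_).trans (integral_zero _ _)
  filter_upwards [hint.prod_left_ae] with z hz
  have hz_line : (fun t => w (insertNthMeasurableEquiv j (t, z))) =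
      fun t => w (insertNthMeasurableEquiv j (0, z) +
        (t - insertNthMeasurableEquiv j (0, z) j) • EuclideanSpace.single j 1) := by
    simp only [← insertNthMeasurableEquiv_eq_add_smul_single]
  rw [hz_line] at hz ⊢
  exact hline _ hz

end EuclideanSpace

local notation "∂[" j "] " f:max y:max => fderiv ℝ f y (EuclideanSpace.single j (1 : ℝ))

section Euclidean

variable {n : ℕ}

theorem integral_partial_fderiv_mul_eq_zero (j : Fin n) {G P : EuclideanSpace ℝ (Fin n) → ℝ}
    (hG : ContDiff ℝ 2 G) (hP : ContDiff ℝ 1 P)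
    (hbd : ∀ y : EuclideanSpace ℝ (Fin n),
      Tendsto (fun t : ℝ => ∂[j] G (y + (t - y j) • EuclideanSpace.single j 1) *
          P (y + (t - y j) • EuclideanSpace.single j 1)) (cocompact ℝ) (nhds 0))
    (hint : Integrable fun y => ∂[j] (fun y' => ∂[j] G y') y * P y + ∂[j] G y * ∂[j] P y) :
    ∫ y, (∂[j] (fun y' => ∂[j] G y') y * P y + ∂[j] G y * ∂[j] P y) = 0 := by
  have hGj : Differentiable ℝ fun y => ∂[j] G y :=
    ((hG.fderiv_right le_rfl).clm_apply contDiff_const).differentiable one_ne_zero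
  refine EuclideanSpace.integral_eq_zero_of_integral_line_eq_zero j hint fun y hy => ?_
  refine integral_eq_zero_of_hasDerivAt_of_tendsto_cocompact (fun t => ?_) hy (hbd y)
  exact (hasDerivAt_comp_add_sub_smul y _ _ t (hGj _)).mul
    (hasDerivAt_comp_add_sub_smul y _ _ t (hP.differentiable one_ne_zero _))

theorem half_norm_sub_gradient_log_sq_mul (G : EuclideanSpace ℝ (Fin n) → ℝ)
    {P : EuclideanSpace ℝ (Fin n) → ℝ} {y : EuclideanSpace ℝ (Fin n)}
    (hP : DifferentiableAt ℝ P y) (hPy : P y ≠ 0) :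
    (1 / 2 : ℝ) * (‖gradient G y - gradient (fun y' => Real.log (P y')) y‖ ^ 2 * P y) =
      ∑ j, ((1 / 2 : ℝ) * (∂[j] G y) ^ 2 * P y - ∂[j] G y * ∂[j] P y) +
        (1 / 2 : ℝ) * (‖gradient (fun y' => Real.log (P y')) y‖ ^ 2 * P y) := by
  rw [← mul_assoc, EuclideanSpace.half_norm_sub_sq, add_mul, Finset.sum_mul, mul_assoc]
  congr 1
  refine Finset.sum_congr rfl fun j _ => ?_
  simp only [EuclideanSpace.gradient_apply, ← fderiv_log_mul_self hP hPy]
  ring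

theorem integrable_half_sq_fderiv_mul {G P : EuclideanSpace ℝ (Fin n) → ℝ}
    (hG : ContDiff ℝ 1 G) (hP : ContDiff ℝ 1 P) (hP_pos : ∀ y, 0 < P y)
    (hint1 : Integrable fun y =>
      ‖gradient G y - gradient (fun y' => Real.log (P y')) y‖ ^ 2 * P y)
    (hint3 : Integrable fun y => ‖gradient (fun y' => Real.log (P y')) y‖ ^ 2 * P y)
    (hprod : ∀ j, Integrable fun y => ∂[j] G y * ∂[j] P y) (j : Fin n) :
    Integrable fun y => (1 / 2 : ℝ) * (∂[j] G y) ^ 2 * P y := by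
  have hsum : Integrable fun y => ∑ j, (1 / 2 : ℝ) * (∂[j] G y) ^ 2 * P y := by
    refine (((hint1.const_mul (1 / 2 : ℝ)).sub (hint3.const_mul (1 / 2 : ℝ))).add
      (integrable_finsetSum Finset.univ fun j _ => hprod j)).congr (ae_of_all _ fun y => ?_)
    simp only [Pi.add_apply, Pi.sub_apply,
      half_norm_sub_gradient_log_sq_mul G (hP.differentiable one_ne_zero y) (hP_pos y).ne',
      add_sub_cancel_right, ← Finset.sum_add_distrib, sub_add_cancel]
  have hcont : ∀ k, Continuous fun y => ∂[k] G y := fun k =>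
    (hG.continuous_fderiv one_ne_zero).clm_apply continuous_const
  refine integrable_of_integrable_sum_of_nonneg hsum (fun k _ y => ?_) (fun k _ => ?_)
    (Finset.mem_univ j)
  · have := hP_pos y
    positivity
  · exact ((continuous_const.mul ((hcont k).pow 2)).mul hP.continuous).aestronglyMeasurable

theorem score_matching_identity_unconditional {G P : EuclideanSpace ℝ (Fin n) → ℝ}
    (hG : ContDiff ℝ 2 G) (hP : ContDiff ℝ 1 P) (hP_pos : ∀ y, 0 < P y)
    (hbd : ∀ (j : Fin n) (y : EuclideanSpace ℝ (Fin n)),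
      Tendsto (fun t : ℝ => ∂[j] G (y + (t - y j) • EuclideanSpace.single j 1) *
          P (y + (t - y j) • EuclideanSpace.single j 1)) (cocompact ℝ) (nhds 0))
    (hint1 : Integrable fun y =>
      ‖gradient G y - gradient (fun y' => Real.log (P y')) y‖ ^ 2 * P y)
    (hint2 : ∀ j, Integrable fun y =>
      ((1 / 2 : ℝ) * (∂[j] G y) ^ 2 + ∂[j] (fun y' => ∂[j] G y') y) * P y)
    (hint3 : Integrable fun y => ‖gradient (fun y' => Real.log (P y')) y‖ ^ 2 * P y)
    (hint4 : ∀ j, Integrable fun y => ∂[j] G y * ∂[j] (fun y' => Real.log (P y')) y * P y) :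
    (1 / 2 : ℝ) * ∫ y, ‖gradient G y - gradient (fun y' => Real.log (P y')) y‖ ^ 2 * P y =
      (∑ j, ∫ y, ((1 / 2 : ℝ) * (∂[j] G y) ^ 2 + ∂[j] (fun y' => ∂[j] G y') y) * P y) +
        (1 / 2 : ℝ) * ∫ y, ‖gradient (fun y' => Real.log (P y')) y‖ ^ 2 * P y := by
  set T : Fin n → EuclideanSpace ℝ (Fin n) → ℝ :=
    fun j y => (1 / 2 : ℝ) * (∂[j] G y) ^ 2 * P y - ∂[j] G y * ∂[j] P y with hT_def
  set W : Fin n → EuclideanSpace ℝ (Fin n) → ℝ :=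
    fun j y => ∂[j] (fun y' => ∂[j] G y') y * P y + ∂[j] G y * ∂[j] P y with hW_def
  have hPd := hP.differentiable one_ne_zero
  have hprod : ∀ j, Integrable fun y => ∂[j] G y * ∂[j] P y := fun j => by
    simpa only [mul_assoc, fderiv_log_mul_self (hPd _) (hP_pos _).ne'] using hint4 j
  have hT : ∀ j, Integrable (T j) := fun j =>
    (integrable_half_sq_fderiv_mul (hG.of_le one_le_two) hP hP_pos hint1 hint3 hprod j).sub
      (hprod j)
  have hW : ∀ j, Integrable (W j) := fun j => ((hint2 j).sub (hT j)).congr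
    (ae_of_all _ fun y => by simp only [Pi.sub_apply, hT_def, hW_def]; ring)
  calc (1 / 2 : ℝ) * ∫ y, ‖gradient G y - gradient (fun y' => Real.log (P y')) y‖ ^ 2 * P y
      = ∫ y, (∑ j, T j y +
          (1 / 2 : ℝ) * (‖gradient (fun y' => Real.log (P y')) y‖ ^ 2 * P y)) := by
        rw [← integral_const_mul]
        simp only [half_norm_sub_gradient_log_sq_mul G (hPd _) (hP_pos _).ne', hT_def]
    _ = (∑ j, ∫ y, (T j y + W j y)) +
          (1 / 2 : ℝ) * ∫ y, ‖gradient (fun y' => Real.log (P y')) y‖ ^ 2 * P y := by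
        have hW_zero : ∀ j, ∫ y, W j y = 0 := fun j =>
          integral_partial_fderiv_mul_eq_zero j hG hP (hbd j) (hW j)
        simp only [integral_add (integrable_finsetSum _ fun j _ => hT j) (hint3.const_mul _),
          integral_finsetSum _ fun j _ => hT j, integral_const_mul, integral_add (hT _) (hW _),
          hW_zero, add_zero]
    _ = _ := by
        congr 1
        refine Finset.sum_congr rfl fun j _ => integral_congr_ae (ae_of_all _ fun y => ?_)
        simp only [hT_def, hW_def]
        ring

end Euclidean

theorem score_matching_identity_general
    {dy dx : ℕ}
    (p g : EuclideanSpace ℝ (Fin dy) × EuclideanSpace ℝ (Fin dx) → ℝ)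
    (hp_pos : ∀ yx, 0 < p yx)
    (hp_diff : ∀ x, ContDiff ℝ 1 (fun y => p (y, x)))
    (hg_diff : ∀ x, ContDiff ℝ 2 (fun y => g (y, x)))
    -- boundary condition: for each j and x, (∂g/∂y_j)(y,x)·p(y,x) → 0 as |y_j| → ∞
    (hbd : ∀ (j : Fin dy) (x : EuclideanSpace ℝ (Fin dx)) (y : EuclideanSpace ℝ (Fin dy)),
      Tendsto (fun t : ℝ =>
          (fderiv ℝ (fun y' => g (y', x)) (y + (t - y j) • EuclideanSpace.single j 1)
              (EuclideanSpace.single j 1)) *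
            p (y + (t - y j) • EuclideanSpace.single j 1, x))
        (cocompact ℝ) (nhds 0))
    -- integrability of all terms appearing below
    (hint1 : Integrable fun yx : EuclideanSpace ℝ (Fin dy) × EuclideanSpace ℝ (Fin dx) =>
      ‖gradient (fun y => g (y, yx.2)) yx.1 -
        gradient (fun y => Real.log (p (y, yx.2))) yx.1‖ ^ 2 * p yx)
    (hint2 : ∀ j : Fin dy,
      Integrable fun yx : EuclideanSpace ℝ (Fin dy) × EuclideanSpace ℝ (Fin dx) =>
        ((1 / 2 : ℝ) * (fderiv ℝ (fun y => g (y, yx.2)) yx.1 (EuclideanSpace.single j 1)) ^ 2 +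
          fderiv ℝ (fun y => fderiv ℝ (fun y' => g (y', yx.2)) y (EuclideanSpace.single j 1))
            yx.1 (EuclideanSpace.single j 1)) * p yx)
    (hint3 : Integrable fun yx : EuclideanSpace ℝ (Fin dy) × EuclideanSpace ℝ (Fin dx) =>
      ‖gradient (fun y => Real.log (p (y, yx.2))) yx.1‖ ^ 2 * p yx)
    (hint4 : ∀ j : Fin dy,
      Integrable fun yx : EuclideanSpace ℝ (Fin dy) × EuclideanSpace ℝ (Fin dx) =>
        (fderiv ℝ (fun y => g (y, yx.2)) yx.1 (EuclideanSpace.single j 1)) *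
          (fderiv ℝ (fun y => Real.log (p (y, yx.2))) yx.1 (EuclideanSpace.single j 1)) * p yx) :
    (1 / 2 : ℝ) * ∫ yx : EuclideanSpace ℝ (Fin dy) × EuclideanSpace ℝ (Fin dx),
        ‖gradient (fun y => g (y, yx.2)) yx.1 -
          gradient (fun y => Real.log (p (y, yx.2))) yx.1‖ ^ 2 * p yx
      = (∑ j : Fin dy,
          ∫ yx : EuclideanSpace ℝ (Fin dy) × EuclideanSpace ℝ (Fin dx),
            ((1 / 2 : ℝ) *
                (fderiv ℝ (fun y => g (y, yx.2)) yx.1 (EuclideanSpace.single j 1)) ^ 2 +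
              fderiv ℝ
                  (fun y => fderiv ℝ (fun y' => g (y', yx.2)) y (EuclideanSpace.single j 1))
                  yx.1 (EuclideanSpace.single j 1)) * p yx)
        + (1 / 2 : ℝ) * ∫ yx : EuclideanSpace ℝ (Fin dy) × EuclideanSpace ℝ (Fin dx),
            ‖gradient (fun y => Real.log (p (y, yx.2))) yx.1‖ ^ 2 * p yx := by
  simp only [Measure.volume_eq_prod] at hint1 hint2 hint3 hint4 ⊢
  simp only [integral_prod_symm _ hint1, integral_prod_symm _ hint3,
    integral_prod_symm _ (hint2 _)]
  rw [← integral_const_mul, ← integral_const_mul,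
    ← integral_finsetSum _ fun j _ => (hint2 j).integral_prod_right,
    ← integral_add (integrable_finsetSum _ fun j _ => (hint2 j).integral_prod_right)
      (hint3.integral_prod_right.const_mul _)]
  refine integral_congr_ae ?_
  filter_upwards [hint1.prod_left_ae, hint3.prod_left_ae,
    ae_all_iff.2 fun j => (hint2 j).prod_left_ae, ae_all_iff.2 fun j => (hint4 j).prod_left_ae]
    with x h1 h3 h2 h4
  exact score_matching_identity_unconditional (hg_diff x) (hp_diff x) (fun y => hp_pos (y, x))
    (fun j y => hbd j x y) h1 h2 h3 h4

/-- Score matching identity: the Fisher divergence equals the tractable objective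
`∑_j ∫∫ [ (1/2)(∂g/∂y_j)² + ∂²g/∂y_j² ] p` plus a constant `C` not depending on `g`.
Here `∇_y log q(y|x) = ∇_y log p(y,x)` since the `x`-marginal cancels under `∇_y`. -/
theorem score_matching_identity
    {dy dx : ℕ}
    (p g : EuclideanSpace ℝ (Fin dy) × EuclideanSpace ℝ (Fin dx) → ℝ)
    (hp_pos : ∀ yx, 0 < p yx) (hp_prob : ∫ yx, p yx = 1)
    (hp_diff : ∀ x, ContDiff ℝ 1 (fun y => p (y, x)))
    (hg_diff : ∀ x, ContDiff ℝ 2 (fun y => g (y, x)))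
    -- boundary condition: for each j and x, (∂g/∂y_j)(y,x)·p(y,x) → 0 as |y_j| → ∞
    (hbd : ∀ (j : Fin dy) (x : EuclideanSpace ℝ (Fin dx)) (y : EuclideanSpace ℝ (Fin dy)),
      Tendsto (fun t : ℝ =>
          (fderiv ℝ (fun y' => g (y', x)) (y + (t - y j) • EuclideanSpace.single j 1)
              (EuclideanSpace.single j 1)) *
            p (y + (t - y j) • EuclideanSpace.single j 1, x))
        (cocompact ℝ) (nhds 0))
    -- integrability of all terms appearing below
    (hint1 : Integrable fun yx : EuclideanSpace ℝ (Fin dy) × EuclideanSpace ℝ (Fin dx) =>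
      ‖gradient (fun y => g (y, yx.2)) yx.1 -
        gradient (fun y => Real.log (p (y, yx.2))) yx.1‖ ^ 2 * p yx)
    (hint2 : ∀ j : Fin dy,
      Integrable fun yx : EuclideanSpace ℝ (Fin dy) × EuclideanSpace ℝ (Fin dx) =>
        ((1 / 2 : ℝ) * (fderiv ℝ (fun y => g (y, yx.2)) yx.1 (EuclideanSpace.single j 1)) ^ 2 +
          fderiv ℝ (fun y => fderiv ℝ (fun y' => g (y', yx.2)) y (EuclideanSpace.single j 1))
            yx.1 (EuclideanSpace.single j 1)) * p yx)
    (hint3 : Integrable fun yx : EuclideanSpace ℝ (Fin dy) × EuclideanSpace ℝ (Fin dx) =>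
      ‖gradient (fun y => Real.log (p (y, yx.2))) yx.1‖ ^ 2 * p yx)
    (hint4 : ∀ j : Fin dy,
      Integrable fun yx : EuclideanSpace ℝ (Fin dy) × EuclideanSpace ℝ (Fin dx) =>
        (fderiv ℝ (fun y => g (y, yx.2)) yx.1 (EuclideanSpace.single j 1)) *
          (fderiv ℝ (fun y => Real.log (p (y, yx.2))) yx.1 (EuclideanSpace.single j 1)) * p yx) :
    (1 / 2 : ℝ) * ∫ yx : EuclideanSpace ℝ (Fin dy) × EuclideanSpace ℝ (Fin dx),
        ‖gradient (fun y => g (y, yx.2)) yx.1 -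
          gradient (fun y => Real.log (p (y, yx.2))) yx.1‖ ^ 2 * p yx
      = (∑ j : Fin dy,
          ∫ yx : EuclideanSpace ℝ (Fin dy) × EuclideanSpace ℝ (Fin dx),
            ((1 / 2 : ℝ) *
                (fderiv ℝ (fun y => g (y, yx.2)) yx.1 (EuclideanSpace.single j 1)) ^ 2 +
              fderiv ℝ
                  (fun y => fderiv ℝ (fun y' => g (y', yx.2)) y (EuclideanSpace.single j 1))
                  yx.1 (EuclideanSpace.single j 1)) * p yx)
        + (1 / 2 : ℝ) * ∫ yx : EuclideanSpace ℝ (Fin dy) × EuclideanSpace ℝ (Fin dx),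
            ‖gradient (fun y => Real.log (p (y, yx.2))) yx.1‖ ^ 2 * p yx :=
  score_matching_identity_general p g hp_pos hp_diff hg_diff hbd hint1 hint2 hint3 hint4
end

section
/- Theorem (NKC performs SDR): Assume log q(y|x) is continuous on compact Y × X, q(y|x) > 0, Y is convex with nonempty interior, and ∇_y log q(y|x) = ∑_{i=1}^d ∇_y w_i(y) h_i(x) for C¹ functions w_i and continuous h = (h_1,…,h_d). Let p(y|x) = q(y|x)/∫q(y'|x)dy' be the normalized conditional density. Then p(y|x) is a measurable function of (y, h(x)); in particular h(x₁) = h(x₂) implies p(·|x₁) = p(·|x₂), so the conditional distribution of y given x depends on x only through the d-dimensional representation h(x). -/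
open MeasureTheory
open scoped BigOperators

/-!
On the interior of `Y`, the gradient hypothesis says that `y ↦ log q(y|x) - ∑ i, h_i(x) w_i(y)`
has zero derivative; the interior of a convex set is connected, so this difference is a constant
`a(x)` there, and by continuity and density of the interior also on `Y`. Hence
`q(y|x) = exp (a(x)) · exp (∑ i, h_i(x) w_i(y))` on `Y`, and normalizing over `Y` cancels the
factor `exp (a(x))`, leaving a function of `y` and `h(x)` only.
-/

theorem Convex.exists_eqOn_add_of_fderiv_eq_on_interior
    {E G : Type*} [NormedAddCommGroup E] [NormedSpace ℝ E]
    [NormedAddCommGroup G] [NormedSpace ℝ G] {s : Set E} {f g : E → G}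
    (hs : Convex ℝ s) (hs_int : (interior s).Nonempty)
    (hfc : ContinuousOn f s) (hgc : ContinuousOn g s)
    (hfd : DifferentiableOn ℝ f (interior s)) (hgd : DifferentiableOn ℝ g (interior s))
    (hfg : ∀ y ∈ interior s, fderiv ℝ f y = fderiv ℝ g y) :
    ∃ a, Set.EqOn f (g · + a) s := by
  obtain ⟨a, ha⟩ :=
    isOpen_interior.exists_eq_add_of_fderiv_eq hs.interior.isPreconnected hfd hgd hfg
  refine ⟨a, ha.of_subset_closure hfc (hgc.add continuousOn_const) interior_subset ?_⟩
  rw [hs.closure_interior_eq_closure_of_nonempty_interior hs_int]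
  exact subset_closure

theorem fderiv_eq_fderiv_sum_mul_of_gradient_eq
    {E ι : Type*} [NormedAddCommGroup E] [InnerProductSpace ℝ E] [CompleteSpace E] [Fintype ι]
    {f : E → ℝ} {w : ι → E → ℝ} {c : ι → ℝ} {y : E}
    (hw : ∀ i, DifferentiableAt ℝ (w i) y)
    (hgrad : gradient f y = ∑ i, c i • gradient (w i) y) :
    fderiv ℝ f y = fderiv ℝ (fun y' => ∑ i, c i * w i y') y := by
  rw [← toDual_gradient, hgrad, fderiv_fun_sum fun i _ => (hw i).const_mul (c i)]
  simp only [map_sum, map_smul, toDual_gradient, fderiv_const_mul (hw _)]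

theorem Convex.exists_eq_sum_mul_add_of_gradient_eq
    {E ι : Type*} [NormedAddCommGroup E] [InnerProductSpace ℝ E] [CompleteSpace E] [Fintype ι]
    {s : Set E} {f : E → ℝ} {w : ι → E → ℝ} {c : ι → ℝ}
    (hs : Convex ℝ s) (hs_int : (interior s).Nonempty)
    (hfc : ContinuousOn f s) (hfd : DifferentiableOn ℝ f (interior s))
    (hw : ∀ i, Differentiable ℝ (w i))
    (hgrad : ∀ y ∈ interior s, gradient f y = ∑ i, c i • gradient (w i) y) :
    ∃ a, ∀ y ∈ s, f y = ∑ i, c i * w i y + a := by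
  have hwc : Differentiable ℝ fun y => ∑ i, c i * w i y :=
    Differentiable.fun_sum fun i _ => (hw i).const_mul (c i)
  exact hs.exists_eqOn_add_of_fderiv_eq_on_interior hs_int hfc hwc.continuous.continuousOn hfd
    hwc.differentiableOn fun y hy =>
      fderiv_eq_fderiv_sum_mul_of_gradient_eq (fun i => (hw i).differentiableAt) (hgrad y hy)

theorem div_setIntegral_eq_of_eqOn_const_mul
    {α : Type*} [MeasurableSpace α] {μ : Measure α} {s : Set α} {f g : α → ℝ} {c : ℝ}
    (hs : NullMeasurableSet s μ) (hc : c ≠ 0) (hfg : Set.EqOn f (fun y => c * g y) s)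
    {y : α} (hy : y ∈ s) :
    f y / ∫ y' in s, f y' ∂μ = g y / ∫ y' in s, g y' ∂μ := by
  rw [setIntegral_congr_fun₀ hs hfg, integral_const_mul, hfg hy, mul_div_mul_left _ _ hc]

theorem measurable_div_setIntegral
    {α Z : Type*} [MeasurableSpace α] [MeasurableSpace Z] {μ : Measure α} [SFinite μ]
    {f : Z × α → ℝ} (hf : StronglyMeasurable f) (s : Set α) :
    Measurable fun yz : α × Z => f (yz.2, yz.1) / ∫ y' in s, f (yz.2, y') ∂μ :=
  (hf.measurable.comp measurable_swap).div (hf.integral_prod_right'.measurable.comp measurable_snd)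

noncomputable def expFamilyKernel {E ι : Type*} [Fintype ι] (w : ι → E → ℝ)
    (zy : EuclideanSpace ℝ ι × E) : ℝ :=
  Real.exp (∑ i, zy.1 i * w i zy.2)

theorem continuous_expFamilyKernel {E ι : Type*} [TopologicalSpace E] [Fintype ι]
    {w : ι → E → ℝ} (hw : ∀ i, Continuous (w i)) : Continuous (expFamilyKernel w) :=
  Real.continuous_exp.comp <| continuous_finsetSum _ fun i _ =>
    ((EuclideanSpace.proj i).continuous.comp continuous_fst).mul ((hw i).comp continuous_snd)

theorem nkc_sufficient_dimension_reduction_general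
    {dy dx d : ℕ}
    (Y : Set (EuclideanSpace ℝ (Fin dy))) (X : Set (EuclideanSpace ℝ (Fin dx)))
    (hY_conv : Convex ℝ Y) (hY_int : (interior Y).Nonempty)
    (q : EuclideanSpace ℝ (Fin dy) → EuclideanSpace ℝ (Fin dx) → ℝ)
    (hq_pos : ∀ y ∈ Y, ∀ x ∈ X, 0 < q y x)
    (hq_cont : ContinuousOn (fun yx : EuclideanSpace ℝ (Fin dy) × EuclideanSpace ℝ (Fin dx) =>
      Real.log (q yx.1 yx.2)) (Y ×ˢ X))
    (hq_diff : ∀ x ∈ X, DifferentiableOn ℝ (fun y => Real.log (q y x)) Y)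
    (w : Fin d → EuclideanSpace ℝ (Fin dy) → ℝ) (hw : ∀ i, ContDiff ℝ 1 (w i))
    (h : Fin d → EuclideanSpace ℝ (Fin dx) → ℝ)
    (hgrad : ∀ x ∈ X, ∀ y ∈ interior Y,
      gradient (fun y' => Real.log (q y' x)) y = ∑ i, h i x • gradient (w i) y)
    (p : EuclideanSpace ℝ (Fin dy) → EuclideanSpace ℝ (Fin dx) → ℝ)
    (hp : ∀ y x, p y x = q y x / ∫ y' in Y, q y' x) :
    (∃ Φ : EuclideanSpace ℝ (Fin dy) × EuclideanSpace ℝ (Fin d) → ℝ,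
        Measurable Φ ∧
        ∀ y ∈ Y, ∀ x ∈ X, p y x = Φ (y, WithLp.toLp 2 (fun i => h i x))) ∧
    (∀ x₁ ∈ X, ∀ x₂ ∈ X, (∀ i, h i x₁ = h i x₂) → ∀ y ∈ Y, p y x₁ = p y x₂) := by
  have hwd : ∀ i, Differentiable ℝ (w i) := fun i => (hw i).differentiable one_ne_zero
  set Φ := fun yz : EuclideanSpace ℝ (Fin dy) × EuclideanSpace ℝ (Fin d) =>
    expFamilyKernel w (yz.2, yz.1) / ∫ y' in Y, expFamilyKernel w (yz.2, y')
  have hrep : ∀ y ∈ Y, ∀ x ∈ X, p y x = Φ (y, WithLp.toLp 2 (fun i => h i x)) := by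
    intro y hy x hx
    obtain ⟨a, ha⟩ : ∃ a, ∀ y' ∈ Y, Real.log (q y' x) = ∑ i, h i x * w i y' + a :=
      hY_conv.exists_eq_sum_mul_add_of_gradient_eq hY_int
        (hq_cont.comp (continuous_id.prodMk continuous_const).continuousOn
          fun y' hy' => Set.mk_mem_prod hy' hx)
        ((hq_diff x hx).mono interior_subset) hwd (hgrad x hx)
    have hq : Set.EqOn (q · x)
        (fun y' => Real.exp a * expFamilyKernel w (WithLp.toLp 2 (fun i => h i x), y')) Y := by
      intro y' hy'
      simp only [expFamilyKernel]
      rw [← Real.exp_add, add_comm, ← ha y' hy', Real.exp_log (hq_pos y' hy' x hx)]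
    rw [hp]
    exact div_setIntegral_eq_of_eqOn_const_mul (hY_conv.nullMeasurableSet volume)
      (Real.exp_ne_zero a) hq hy
  refine ⟨⟨Φ, ?_, hrep⟩, fun x₁ hx₁ x₂ hx₂ hx y hy => ?_⟩
  · exact measurable_div_setIntegral
      (continuous_expFamilyKernel fun i => (hwd i).continuous).stronglyMeasurable Y
  · rw [hrep y hy x₁ hx₁, hrep y hy x₂ hx₂, funext hx]

/-- Theorem 1 (NKC performs SDR): if `∇_y log q(y|x) = ∑ i, h_i(x) • ∇_y w_i(y)` on a
compact convex `Y` with nonempty interior, then the normalized conditional density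
`p(y|x) = q(y|x)/∫_Y q(y'|x) dy'` is a measurable function of `(y, h(x))`; in particular
`h(x₁) = h(x₂)` implies `p(·|x₁) = p(·|x₂)`. -/
theorem nkc_sufficient_dimension_reduction
    {dy dx d : ℕ}
    (Y : Set (EuclideanSpace ℝ (Fin dy))) (X : Set (EuclideanSpace ℝ (Fin dx)))
    (hY_comp : IsCompact Y) (hY_conv : Convex ℝ Y) (hY_int : (interior Y).Nonempty)
    (hX_comp : IsCompact X)
    (q : EuclideanSpace ℝ (Fin dy) → EuclideanSpace ℝ (Fin dx) → ℝ)
    (hq_pos : ∀ y ∈ Y, ∀ x ∈ X, 0 < q y x)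
    (hq_cont : ContinuousOn (fun yx : EuclideanSpace ℝ (Fin dy) × EuclideanSpace ℝ (Fin dx) =>
      Real.log (q yx.1 yx.2)) (Y ×ˢ X))
    (hq_diff : ∀ x ∈ X, DifferentiableOn ℝ (fun y => Real.log (q y x)) Y)
    (w : Fin d → EuclideanSpace ℝ (Fin dy) → ℝ) (hw : ∀ i, ContDiff ℝ 1 (w i))
    (h : Fin d → EuclideanSpace ℝ (Fin dx) → ℝ) (hh : ∀ i, Continuous (h i))
    (hgrad : ∀ x ∈ X, ∀ y ∈ interior Y,
      gradient (fun y' => Real.log (q y' x)) y = ∑ i, h i x • gradient (w i) y)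
    (p : EuclideanSpace ℝ (Fin dy) → EuclideanSpace ℝ (Fin dx) → ℝ)
    (hp : ∀ y x, p y x = q y x / ∫ y' in Y, q y' x) :
    (∃ Φ : EuclideanSpace ℝ (Fin dy) × EuclideanSpace ℝ (Fin d) → ℝ,
        Measurable Φ ∧
        ∀ y ∈ Y, ∀ x ∈ X, p y x = Φ (y, WithLp.toLp 2 (fun i => h i x))) ∧
    (∀ x₁ ∈ X, ∀ x₂ ∈ X, (∀ i, h i x₁ = h i x₂) → ∀ y ∈ Y, p y x₁ = p y x₂) :=
  nkc_sufficient_dimension_reduction_general Y X hY_conv hY_int q hq_pos hq_cont hq_diff w hw h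
    hgrad p hp
end
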